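/- arXiv:2303.17230 — 2 statements merged into one kernel-verified Lean document; each statement's English description precedes it below -/
import Mathlib

section
/- With notation as above, log det(Σ̂_j) − log det(Σ̂) = log(1 + a_j' Y (Y'QY)⁻¹ Y' a_j), provided Y'QY is invertible. -/
open Matrix
set_option linter.unusedSectionVars false
set_option maxHeartbeats 1000000

variable {l m n' : Type*} [Fintype l] [Fintype m] [Fintype n']

lemma mul_vecMulVec' (A : Matrix l m ℝ) (u : m → ℝ) (v : n' → ℝ) :
    A * vecMulVec u v = vecMulVec (A *ᵥ u) v := by
  ext i c; simp [mul_apply, vecMulVec_apply, mulVec, dotProduct, Finset.sum_mul, mul_assoc]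

lemma vecMulVec_mul' (A : Matrix m n' ℝ) (u : l → ℝ) (v : m → ℝ) :
    vecMulVec u v * A = vecMulVec u (Aᵀ *ᵥ v) := by
  ext i c; simp [mul_apply, vecMulVec_apply, mulVec, dotProduct, Finset.mul_sum, mul_assoc,
    mul_comm, mul_left_comm]

lemma vecMulVec_mulVec' (u : l → ℝ) (v x : m → ℝ) :
    vecMulVec u v *ᵥ x = (v ⬝ᵥ x) • u := by
  ext i; simp [vecMulVec_apply, mulVec, dotProduct, Finset.mul_sum, mul_assoc, mul_comm,
    mul_left_comm]

lemma row_mul_mul_col {ι : Type*} [Unique ι] (v u : m → ℝ) (A : Matrix m m ℝ) :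
    (replicateRow ι v * A * replicateCol ι u) default default = v ⬝ᵥ (A *ᵥ u) := by
  simp [mul_apply, replicateRow, replicateCol, dotProduct, mulVec, Finset.mul_sum, Finset.sum_mul, mul_assoc]
  rw [Finset.sum_comm]

/-- `log det Σ̂ⱼ − log det Σ̂ = log(1 + aⱼ' Y (Y'QY)⁻¹ Y' aⱼ)` when `Y'QY` is positive
definite. -/
theorem stmt4 {n p k : ℕ} (Y : Matrix (Fin n) (Fin p) ℝ)
    (X : Matrix (Fin n) (Fin (k + 1)) ℝ) (j : Fin (k + 1))
    (hXfull : IsUnit (Xᵀ * X).det)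
    (Xj : Matrix (Fin n) (Fin k) ℝ) (hXj : Xj = X.submatrix id j.succAbove)
    (hXjfull : IsUnit (Xjᵀ * Xj).det)
    (Q Qj : Matrix (Fin n) (Fin n) ℝ)
    (hQ : Q = 1 - X * (Xᵀ * X)⁻¹ * Xᵀ)
    (hQj : Qj = 1 - Xj * (Xjᵀ * Xj)⁻¹ * Xjᵀ)
    (xj : Fin n → ℝ) (hxj : xj = fun i => X i j)
    (hnz : Qj.mulVec xj ≠ 0)
    (a : Fin n → ℝ)
    (ha : a = fun i => (Qj.mulVec xj) i / Real.sqrt (∑ r, (Qj.mulVec xj) r ^ 2))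
    (Shat Shatj : Matrix (Fin p) (Fin p) ℝ)
    (hShat : Shat = (n : ℝ)⁻¹ • (Yᵀ * Q * Y))
    (hShatj : Shatj = (n : ℝ)⁻¹ • (Yᵀ * Qj * Y))
    (hPD : (Yᵀ * Q * Y).PosDef) :
    Real.log Shatj.det - Real.log Shat.det
      = Real.log (1 + (Yᵀ *ᵥ a) ⬝ᵥ ((Yᵀ * Q * Y)⁻¹ *ᵥ (Yᵀ *ᵥ a))) := by
  have hn : 0 < n := by
    rcases Nat.eq_zero_or_pos n with h | h
    · exact absurd (funext fun i => Fin.elim0 (h ▸ i)) hnz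
    · exact h
  set P : Matrix (Fin n) (Fin n) ℝ := X * (Xᵀ * X)⁻¹ * Xᵀ with hP
  set Pj : Matrix (Fin n) (Fin n) ℝ := Xj * (Xjᵀ * Xj)⁻¹ * Xjᵀ with hPj
  set w : Fin n → ℝ := Qj *ᵥ xj with hw
  set s : ℝ := ∑ r, w r ^ 2 with hs
  have hs_pos : 0 < s := by
    rcases Function.ne_iff.mp hnz with ⟨r, hr⟩
    exact Finset.sum_pos' (fun i _ => sq_nonneg _)
      ⟨r, Finset.mem_univ r, lt_of_le_of_ne (sq_nonneg _) (Ne.symm (pow_ne_zero 2 hr))⟩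
  have hs_ne : s ≠ 0 := hs_pos.ne'
  -- symmetry facts
  have hGsym : ((Xᵀ * X)⁻¹)ᵀ = (Xᵀ * X)⁻¹ := by
    rw [transpose_nonsing_inv, transpose_mul, transpose_transpose]
  have hGjsym : ((Xjᵀ * Xj)⁻¹)ᵀ = (Xjᵀ * Xj)⁻¹ := by
    rw [transpose_nonsing_inv, transpose_mul, transpose_transpose]
  have hPsym : Pᵀ = P := by
    rw [hP, transpose_mul, transpose_mul, transpose_transpose, hGsym, Matrix.mul_assoc]
  have hPjsym : Pjᵀ = Pj := by
    rw [hPj, transpose_mul, transpose_mul, transpose_transpose, hGjsym, Matrix.mul_assoc]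
  have hQjsym : Qjᵀ = Qj := by
    rw [hQj, transpose_sub, transpose_one, hPjsym]
  -- projections absorb columns
  have hPX : P * X = X := by
    rw [hP]
    simp only [Matrix.mul_assoc]
    rw [Matrix.nonsing_inv_mul _ hXfull, Matrix.mul_one]
  have hPjXj : Pj * Xj = Xj := by
    rw [hPj]
    simp only [Matrix.mul_assoc]
    rw [Matrix.nonsing_inv_mul _ hXjfull, Matrix.mul_one]
  have hQjXj : Qj * Xj = 0 := by
    rw [hQj, Matrix.sub_mul, Matrix.one_mul, hPjXj, sub_self]
  have hXjw : Xjᵀ *ᵥ w = 0 := by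
    rw [hw, mulVec_mulVec, ← hQjsym, ← transpose_mul, hQjXj, transpose_zero, zero_mulVec]
  have hwPj : w = xj - Pj *ᵥ xj := by
    rw [hw, hQj, Matrix.sub_mulVec, one_mulVec]
  have hww : w ⬝ᵥ w = s := by
    rw [hs]; simp [dotProduct, sq]
  have hwxj : w ⬝ᵥ xj = s := by
    have h1 : w ⬝ᵥ (Pj *ᵥ xj) = 0 := by
      rw [hPj, Matrix.mul_assoc, ← mulVec_mulVec, dotProduct_mulVec, ← Matrix.mulVec_transpose,
        hXjw, zero_dotProduct]
    have h2 : w ⬝ᵥ xj - w ⬝ᵥ (Pj *ᵥ xj) = w ⬝ᵥ w := by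
      rw [← dotProduct_sub, ← hwPj]
    linarith [hww]
  -- the rank-one update matrix
  set M : Matrix (Fin n) (Fin n) ℝ := Pj + s⁻¹ • vecMulVec w w with hM
  have hvvsym : (vecMulVec w w)ᵀ = vecMulVec w w := by
    ext i l; simp [vecMulVec_apply, mul_comm]
  have hMsym : Mᵀ = M := by
    rw [hM, transpose_add, transpose_smul, hvvsym, hPjsym]
  have hMxj : M *ᵥ xj = xj := by
    rw [hM, Matrix.add_mulVec, Matrix.smul_mulVec, vecMulVec_mulVec', hwxj,
      smul_smul, inv_mul_cancel₀ hs_ne, one_smul]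
    rw [hwPj]; abel
  have hMXj : M * Xj = Xj := by
    rw [hM, Matrix.add_mul, hPjXj, Matrix.smul_mul, vecMulVec_mul', hXjw]
    have : vecMulVec w (0 : Fin k → ℝ) = 0 := by ext i l; simp [vecMulVec_apply]
    rw [this, smul_zero, add_zero]
  have hMX : M * X = X := by
    ext r c
    by_cases hc : c = j
    · rw [hc]
      have h1 : (M * X) r j = (M *ᵥ xj) r := by
        simp [mul_apply, mulVec, dotProduct, hxj]
      rw [h1, hMxj, hxj]
    · obtain ⟨i, hi⟩ := Fin.exists_succAbove_eq (Ne.symm (Ne.symm hc))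
      subst hi
      have h1 : (M * X) r (j.succAbove i) = (M * Xj) r i := by
        simp [mul_apply, hXj]
      rw [h1, hMXj, hXj]; simp
  have hPXj : P * Xj = Xj := by
    ext r i
    have h1 : (P * Xj) r i = (P * X) r (j.succAbove i) := by
      simp [mul_apply, hXj]
    rw [h1, hPX, hXj]; simp
  have hPxj : P *ᵥ xj = xj := by
    ext r
    have h1 : (P *ᵥ xj) r = (P * X) r j := by
      simp [mul_apply, mulVec, dotProduct, hxj]
    rw [h1, hPX, hxj]
  have hPPj : P * Pj = Pj := by
    rw [hPj]
    simp only [← Matrix.mul_assoc]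
    rw [hPXj]
  have hPw : P *ᵥ w = w := by
    rw [hwPj, Matrix.mulVec_sub, hPxj, mulVec_mulVec, hPPj]
  have hMP : M * P = P := by
    rw [hP]
    simp only [← Matrix.mul_assoc]
    rw [hMX]
  have hPM : P * M = M := by
    rw [hM, Matrix.mul_add, hPPj, Matrix.mul_smul, mul_vecMulVec', hPw]
  have hPMeq : P = M := by
    have h1 : P * M = P := by
      have h2 := congrArg transpose hMP
      rwa [transpose_mul, hPsym, hMsym] at h2
    rw [← hPM, h1]
  have hQQj : Qj = Q + s⁻¹ • vecMulVec w w := by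
    rw [hQ, hQj, hPMeq, hM]; abel
  -- express the rank-one update through a
  have haw : vecMulVec a a = s⁻¹ • vecMulVec w w := by
    ext i l
    rw [ha]
    simp only [vecMulVec_apply, Matrix.smul_apply, smul_eq_mul, ← hw, ← hs]
    rw [div_mul_div_comm, Real.mul_self_sqrt hs_pos.le]
    ring
  set u : Fin p → ℝ := Yᵀ *ᵥ a with hu
  set A : Matrix (Fin p) (Fin p) ℝ := Yᵀ * Q * Y with hA
  have h2 : vecMulVec u u = Yᵀ * vecMulVec a a * Y := by
    rw [mul_vecMulVec', vecMulVec_mul', ← hu]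
  have hB : Yᵀ * Qj * Y = A + vecMulVec u u := by
    rw [hQQj, ← haw, Matrix.mul_add, Matrix.add_mul, ← h2, hA]
  -- determinant identity
  have hAdet : IsUnit A.det := hPD.det_pos.ne'.isUnit
  have hc_nonneg : 0 ≤ u ⬝ᵥ (A⁻¹ *ᵥ u) := by
    have h := (hPD.inv).posSemidef.re_dotProduct_nonneg u
    simpa [hA] using h
  have hdet : (Yᵀ * Qj * Y).det = A.det * (1 + u ⬝ᵥ (A⁻¹ *ᵥ u)) := by
    rw [hB, vecMulVec_eq Unit, det_add_replicateCol_mul_replicateRow hAdet]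
    congr 1
    rw [det_unique, Matrix.add_apply, one_apply_eq, row_mul_mul_col]
  -- logs
  have hcoef_pos : (0:ℝ) < ((n : ℝ)⁻¹) ^ p := by positivity
  have hdetShatj : Shatj.det = ((n : ℝ)⁻¹) ^ p * (A.det * (1 + u ⬝ᵥ (A⁻¹ *ᵥ u))) := by
    rw [hShatj, det_smul, Fintype.card_fin, hdet]
  have hdetShat : Shat.det = ((n : ℝ)⁻¹) ^ p * A.det := by
    rw [hShat, det_smul, Fintype.card_fin, hA]
  have h1c : (0:ℝ) < 1 + u ⬝ᵥ (A⁻¹ *ᵥ u) := by linarith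
  rw [hdetShatj, hdetShat,
    Real.log_mul hcoef_pos.ne' (mul_ne_zero hPD.det_pos.ne' h1c.ne'),
    Real.log_mul hPD.det_pos.ne' h1c.ne',
    Real.log_mul hcoef_pos.ne' hPD.det_pos.ne']
  ring
end

section
/- Let E be an n×p matrix and, for a column index l, let E_l be E with column e_l removed, Q a symmetric n×n matrix, M = (1/p)E'QE and M_l = (1/p)E_l'QE_l both invertible, and β_l = (1/p)e_l'Qe_l − (1/p²)e_l'QE_lM_l⁻¹E_l'Qe_l ≠ 0. Then E M⁻¹ E' − E_l M_l⁻¹ E_l' = (1/(β_l p²)) E_l M_l⁻¹ E_l' Q e_l e_l' Q E_l M_l⁻¹ E_l' − (1/(β_l p)) E_l M_l⁻¹ E_l' Q e_l e_l' − (1/(β_l p)) e_l e_l' Q E_l M_l⁻¹ E_l' + (1/β_l) e_l e_l'. -/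
open Matrix

private lemma aux_blockinv {m u : Type*} [Fintype m] [Fintype u] [DecidableEq m] [DecidableEq u]
    (B Bi : Matrix m m ℝ) (A : Matrix m u ℝ) (D : Matrix u m ℝ) (C : Matrix u u ℝ) (β : ℝ)
    (hB : B * Bi = 1) (hD : D * Bi * A = C - β • 1) (hβ0 : β ≠ 0) :
    fromBlocks B A D C *
      fromBlocks (Bi + β⁻¹ • (Bi * A * (D * Bi))) ((-β⁻¹) • (Bi * A))
        ((-β⁻¹) • (D * Bi)) (β⁻¹ • (1 : Matrix u u ℝ)) = 1 := by
  have h11 : B * (Bi + β⁻¹ • (Bi * A * (D * Bi))) + A * ((-β⁻¹) • (D * Bi)) = 1 := by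
    simp only [Matrix.mul_add, Matrix.mul_smul, ← Matrix.mul_assoc, hB, Matrix.one_mul]
    module
  have h12 : B * ((-β⁻¹) • (Bi * A)) + A * (β⁻¹ • (1 : Matrix u u ℝ)) = 0 := by
    simp only [Matrix.mul_smul, Matrix.mul_one, ← Matrix.mul_assoc, hB, Matrix.one_mul]
    module
  have h21 : D * (Bi + β⁻¹ • (Bi * A * (D * Bi))) + C * ((-β⁻¹) • (D * Bi)) = 0 := by
    simp only [Matrix.mul_add, Matrix.mul_smul, ← Matrix.mul_assoc, hD, Matrix.sub_mul,
      Matrix.smul_mul, Matrix.one_mul, smul_sub, smul_smul]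
    rw [inv_mul_cancel₀ hβ0]
    module
  have h22 : D * ((-β⁻¹) • (Bi * A)) + C * (β⁻¹ • (1 : Matrix u u ℝ)) = 1 := by
    simp only [Matrix.mul_smul, Matrix.mul_one, ← Matrix.mul_assoc, hD, smul_sub,
      smul_smul, neg_mul]
    rw [inv_mul_cancel₀ hβ0]
    module
  rw [Matrix.fromBlocks_multiply, h11, h12, h21, h22, Matrix.fromBlocks_one]

/-- Rank-one update (block inversion) identity: with `E_l` equal to `E` with column `e_l`
removed, `M = p⁻¹E'QE`, `M_l = p⁻¹E_l'QE_l` invertible, and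
`β_l = p⁻¹e_l'Qe_l − p⁻²e_l'QE_lM_l⁻¹E_l'Qe_l ≠ 0`,
`EM⁻¹E' − E_lM_l⁻¹E_l' = β_l⁻¹p⁻² E_lM_l⁻¹E_l'Qe_le_l'QE_lM_l⁻¹E_l'
  − β_l⁻¹p⁻¹ E_lM_l⁻¹E_l'Qe_le_l' − β_l⁻¹p⁻¹ e_le_l'QE_lM_l⁻¹E_l' + β_l⁻¹ e_le_l'`. -/
theorem stmt15 {n p' : ℕ} (E : Matrix (Fin n) (Fin (p' + 1)) ℝ) (l : Fin (p' + 1))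
    (Q : Matrix (Fin n) (Fin n) ℝ) (hQsym : Qᵀ = Q)
    (El : Matrix (Fin n) (Fin p') ℝ) (hEl : El = E.submatrix id l.succAbove)
    (el : Fin n → ℝ) (hel : el = fun i => E i l)
    (M : Matrix (Fin (p' + 1)) (Fin (p' + 1)) ℝ)
    (hM : M = ((p' + 1 : ℝ))⁻¹ • (Eᵀ * Q * E))
    (Ml : Matrix (Fin p') (Fin p') ℝ)
    (hMl : Ml = ((p' + 1 : ℝ))⁻¹ • (Elᵀ * Q * El))
    (hMU : IsUnit M.det) (hMlU : IsUnit Ml.det)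
    (β : ℝ)
    (hβ : β = ((p' + 1 : ℝ))⁻¹ * (el ⬝ᵥ (Q *ᵥ el))
        - ((p' + 1 : ℝ) ^ 2)⁻¹ * (el ⬝ᵥ ((Q * El * Ml⁻¹ * Elᵀ * Q) *ᵥ el)))
    (hβ0 : β ≠ 0) :
    E * M⁻¹ * Eᵀ - El * Ml⁻¹ * Elᵀ
      = (β⁻¹ * ((p' + 1 : ℝ) ^ 2)⁻¹) •
            (El * Ml⁻¹ * Elᵀ * Q * vecMulVec el el * Q * El * Ml⁻¹ * Elᵀ)
        - (β⁻¹ * ((p' + 1 : ℝ))⁻¹) • (El * Ml⁻¹ * Elᵀ * Q * vecMulVec el el)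
        - (β⁻¹ * ((p' + 1 : ℝ))⁻¹) • (vecMulVec el el * Q * El * Ml⁻¹ * Elᵀ)
        + β⁻¹ • vecMulVec el el := by
  have hp2 : ((p' + 1 : ℝ) ^ 2)⁻¹ = (p' + 1 : ℝ)⁻¹ * (p' + 1 : ℝ)⁻¹ := by
    rw [sq, mul_inv]
  set σ : Fin (p' + 1) ≃ (Fin p' ⊕ Unit) :=
    (finSuccEquiv' l).trans (Equiv.optionEquivSumPUnit (Fin p')) with hσ
  have hσinl : ∀ j, σ.symm (Sum.inl j) = l.succAbove j := by
    intro j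
    simp [hσ, Equiv.optionEquivSumPUnit, finSuccEquiv'_symm_some]
  have hσinr : ∀ u, σ.symm (Sum.inr u) = l := by
    intro u
    simp [hσ, Equiv.optionEquivSumPUnit, finSuccEquiv'_symm_none]
  -- block structure of the reindexed M
  have hM' : M.submatrix σ.symm σ.symm
      = fromBlocks Ml ((p' + 1 : ℝ)⁻¹ • (Elᵀ * Q * replicateCol Unit el))
          ((p' + 1 : ℝ)⁻¹ • (replicateRow Unit el * Q * El))
          ((p' + 1 : ℝ)⁻¹ • (replicateRow Unit el * Q * replicateCol Unit el)) := by
    ext i j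
    cases i <;> cases j <;>
      simp [hM, hMl, hEl, hel, hσinl, hσinr, Matrix.mul_apply, Finset.mul_sum,
        Finset.sum_mul, mul_comm, mul_left_comm]
  -- transpose relation between the off-diagonal blocks
  have hAT : ((p' + 1 : ℝ)⁻¹ • (Elᵀ * Q * replicateCol Unit el))ᵀ
      = (p' + 1 : ℝ)⁻¹ • (replicateRow Unit el * Q * El) := by
    rw [Matrix.transpose_smul, Matrix.transpose_mul, Matrix.transpose_mul, transpose_replicateCol,
      hQsym, Matrix.transpose_transpose, Matrix.mul_assoc]
  have hMlinv : Ml * Ml⁻¹ = 1 := mul_nonsing_inv Ml hMlU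
  -- the β relation
  have hβC : ((p' + 1 : ℝ)⁻¹ • (replicateRow Unit el * Q * El)) * Ml⁻¹ *
        ((p' + 1 : ℝ)⁻¹ • (Elᵀ * Q * replicateCol Unit el))
      = (p' + 1 : ℝ)⁻¹ • (replicateRow Unit el * Q * replicateCol Unit el)
        - β • (1 : Matrix Unit Unit ℝ) := by
    have hATM : ((p' + 1 : ℝ)⁻¹ • (replicateRow Unit el * Q * El)) * Ml⁻¹ *
          ((p' + 1 : ℝ)⁻¹ • (Elᵀ * Q * replicateCol Unit el))
        = ((p' + 1 : ℝ)⁻¹ * (p' + 1 : ℝ)⁻¹) •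
            (replicateRow Unit el * (Q * El * Ml⁻¹ * Elᵀ * Q) * replicateCol Unit el) := by
      rw [Matrix.smul_mul, Matrix.smul_mul, Matrix.mul_smul, smul_smul]
      congr 1
      simp only [Matrix.mul_assoc]
    ext i j
    have hij : i = j := Subsingleton.elim i j
    subst hij
    have key : ∀ (Z : Matrix (Fin n) (Fin n) ℝ),
        (replicateRow Unit el * Z * replicateCol Unit el) i i = el ⬝ᵥ Z *ᵥ el := by
      intro Z
      rw [← Matrix.replicateRow_vecMul, Matrix.replicateRow_mul_replicateCol_apply, ← Matrix.dotProduct_mulVec]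
    rw [hATM, Matrix.sub_apply, Matrix.smul_apply, Matrix.smul_apply, Matrix.smul_apply,
      key, key, Matrix.one_apply_eq, hβ, hp2]
    simp only [smul_eq_mul, mul_one]
    ring
  -- the inverse of the reindexed M
  have hMX := aux_blockinv Ml Ml⁻¹ ((p' + 1 : ℝ)⁻¹ • (Elᵀ * Q * replicateCol Unit el))
    ((p' + 1 : ℝ)⁻¹ • (replicateRow Unit el * Q * El))
    ((p' + 1 : ℝ)⁻¹ • (replicateRow Unit el * Q * replicateCol Unit el)) β hMlinv hβC hβ0
  have hMinv : (M.submatrix σ.symm σ.symm)⁻¹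
      = fromBlocks
          (Ml⁻¹ + β⁻¹ • (Ml⁻¹ * ((p' + 1 : ℝ)⁻¹ • (Elᵀ * Q * replicateCol Unit el)) *
            (((p' + 1 : ℝ)⁻¹ • (replicateRow Unit el * Q * El)) * Ml⁻¹)))
          ((-β⁻¹) • (Ml⁻¹ * ((p' + 1 : ℝ)⁻¹ • (Elᵀ * Q * replicateCol Unit el))))
          ((-β⁻¹) • (((p' + 1 : ℝ)⁻¹ • (replicateRow Unit el * Q * El)) * Ml⁻¹))
          (β⁻¹ • (1 : Matrix Unit Unit ℝ)) := by
    apply inv_eq_right_inv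
    rw [hM']
    exact hMX
  -- transfer back to E, M
  have hsub : (M.submatrix σ.symm σ.symm)⁻¹ = M⁻¹.submatrix σ.symm σ.symm := by
    simpa using Matrix.inv_reindex σ σ M
  have hF : (E.submatrix id ⇑σ.symm : Matrix (Fin n) (Fin p' ⊕ Unit) ℝ)
      = fromCols El (replicateCol Unit el) := by
    ext i j
    cases j with
    | inl j => simp [hσinl, hEl]
    | inr u => simp [hσinr, hel]
  have hEMQ : E * M⁻¹ * Eᵀ
      = fromCols El (replicateCol Unit el) * (M.submatrix σ.symm σ.symm)⁻¹ *
          fromRows Elᵀ (replicateRow Unit el) := by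
    rw [hsub, ← hF, ← transpose_replicateCol, ← transpose_fromCols, ← hF, transpose_submatrix,
      Matrix.submatrix_mul_equiv E M⁻¹ id σ.symm ⇑σ.symm,
      Matrix.submatrix_mul_equiv (E * M⁻¹) Eᵀ id σ.symm id,
      Matrix.submatrix_id_id]
  -- final computation
  rw [hEMQ, hMinv, Matrix.fromCols_mul_fromBlocks, Matrix.fromCols_mul_fromRows,
    vecMulVec_eq Unit, hp2]
  simp only [Matrix.add_mul, Matrix.mul_add, Matrix.smul_mul, Matrix.mul_smul,
    neg_smul, Matrix.neg_mul, smul_smul, Matrix.mul_assoc, Matrix.mul_one]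
  module
end
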